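/- Let p/q be the irreducible fraction with 0 < |q| < p given by the continued fraction expansion p/q = a_1 + 1/(a_2 + 1/(... + 1/a_m)) where all a_i are nonzero even integers and m is even. Then p is odd and q is even; in particular p > 1. -/

import Mathlib

/-!
Write `[a; tail] = n / d` via the convergent recursion `n = a n' + d'`, `d = n'`, where
`n' / d'` is the value of the tail. If every `|aᵢ| ≥ 2` then `|d| < |n|` at each stage, so no
denominator in the continued fraction vanishes and the recursion computes it. If every `aᵢ` is even,
then `n ≡ d'` and `d = n'` modulo 2, so the parities of `(n, d)` alternate starting from `(1, 0)`
and for even `m` the numerator is odd and the denominator even. From `p d = n q` the prime `2`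
divides `q`, hence not `p` by coprimality, and `|q| < p` with `q` even and nonzero forces `p > 1`.
-/

/-- Finite continued fraction a₁ + 1/(a₂ + 1/(⋯ + 1/aₘ)) of a list of integers. -/
def cf : List ℤ → ℚ
  | [] => 0
  | [a] => (a : ℚ)
  | a :: b :: l => (a : ℚ) + (cf (b :: l))⁻¹

/-- Numerator and denominator of `cf l`. The empty expansion gets `1 / 0`, which agrees with
`cf [] = 0` because `1 / 0 = 0` in `ℚ`. -/
def cfFrac : List ℤ → ℤ × ℤ
  | [] => (1, 0)
  | a :: l => (a * (cfFrac l).1 + (cfFrac l).2, (cfFrac l).1)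

lemma cf_cons (a : ℤ) (l : List ℤ) : cf (a :: l) = a + (cf l)⁻¹ := by
  cases l <;> simp [cf]

lemma two_le_abs_of_even {a : ℤ} (ha : a ≠ 0) (he : Even a) : 2 ≤ |a| := by
  obtain ⟨k, rfl⟩ := he
  rcases le_or_gt 0 k with hk | hk
  · rw [abs_of_nonneg (by omega)]; omega
  · rw [abs_of_neg (by omega)]; omega

lemma abs_cfFrac_snd_lt_abs_fst {as : List ℤ} (h : ∀ a ∈ as, 2 ≤ |a|) :
    |(cfFrac as).2| < |(cfFrac as).1| := by
  induction as with
  | nil => simp [cfFrac]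
  | cons a l ih =>
    obtain ⟨ha, hl⟩ := List.forall_mem_cons.mp h
    have hlt := ih hl
    have htri : |a * (cfFrac l).1| ≤ |a * (cfFrac l).1 + (cfFrac l).2| + |(cfFrac l).2| := by
      simpa [add_comm] using abs_sub_le (a * (cfFrac l).1) (a * (cfFrac l).1 + (cfFrac l).2) 0
    rw [abs_mul] at htri
    simp only [cfFrac]
    nlinarith [abs_nonneg (cfFrac l).2]

lemma cf_eq_cfFrac {as : List ℤ} (h : ∀ a ∈ as, 2 ≤ |a|) :
    cf as = ((cfFrac as).1 : ℚ) / (cfFrac as).2 := by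
  induction as with
  | nil => simp [cf, cfFrac]
  | cons a l ih =>
    obtain ⟨-, hl⟩ := List.forall_mem_cons.mp h
    have hn : ((cfFrac l).1 : ℚ) ≠ 0 := by
      have := abs_cfFrac_snd_lt_abs_fst hl
      exact_mod_cast abs_pos.mp ((abs_nonneg _).trans_lt this)
    rw [cf_cons, ih hl, inv_div, cfFrac]
    push_cast
    field_simp

lemma cfFrac_snd_ne_zero {as : List ℤ} (hne : as ≠ []) (h : ∀ a ∈ as, 2 ≤ |a|) :
    (cfFrac as).2 ≠ 0 := by
  obtain ⟨a, l, rfl⟩ := List.exists_cons_of_ne_nil hne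
  have := abs_cfFrac_snd_lt_abs_fst (List.forall_mem_cons.mp h).2
  exact abs_pos.mp ((abs_nonneg _).trans_lt this)

lemma even_cfFrac {as : List ℤ} (h : ∀ a ∈ as, Even a) :
    (Even (cfFrac as).1 ↔ ¬Even as.length) ∧ (Even (cfFrac as).2 ↔ Even as.length) := by
  induction as with
  | nil => simp [cfFrac]
  | cons a l ih =>
    obtain ⟨ha, hl⟩ := List.forall_mem_cons.mp h
    obtain ⟨ihn, ihd⟩ := ih hl
    simp only [cfFrac, List.length_cons, Nat.even_add_one, Int.even_add, ha.mul_right, true_iff]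
    tauto

theorem stmt_11 (as : List ℤ) (hne : as ≠ []) (hlen : Even as.length)
    (ha : ∀ a ∈ as, a ≠ 0 ∧ Even a)
    (p q : ℤ) (hcop : Int.gcd p q = 1) (hq : 0 < |q|) (hqp : |q| < p)
    (hfrac : (p : ℚ) / (q : ℚ) = cf as) :
    Odd p ∧ Even q ∧ 1 < p := by
  have hbig : ∀ a ∈ as, 2 ≤ |a| := fun a h => two_le_abs_of_even (ha a h).1 (ha a h).2
  obtain ⟨hn, hd⟩ := even_cfFrac fun a h => (ha a h).2
  set n := (cfFrac as).1
  set d := (cfFrac as).2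
  have hcross : p * d = n * q := by
    have hq0 : (q : ℚ) ≠ 0 := by exact_mod_cast abs_pos.mp hq
    have hd0 : (d : ℚ) ≠ 0 := by exact_mod_cast cfFrac_snd_ne_zero hne hbig
    rw [cf_eq_cfFrac hbig, div_eq_div_iff hq0 hd0] at hfrac
    exact_mod_cast hfrac
  have hn_odd : ¬Even n := hn.not.mpr (not_not.mpr hlen)
  have hq_even : Even q :=
    (Int.even_mul.mp (hcross ▸ (hd.mpr hlen).mul_left p)).resolve_left hn_odd
  have hp_odd : Odd p := by
    rw [← Int.not_even_iff_odd]
    intro hp_even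
    have := Int.dvd_coe_gcd hp_even.two_dvd hq_even.two_dvd
    rw [hcop] at this
    norm_num at this
  exact ⟨hp_odd, hq_even, by omega⟩
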